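/- Let X₁ and X₂ be real-valued random variables on a probability space with |X₁| ≤ C₁ and |X₂| ≤ C₂ almost surely, and suppose that for all events A₁ in the σ-algebra generated by X₁ and A₂ in the σ-algebra generated by X₂ we have |P(A₁ ∩ A₂) − P(A₁)P(A₂)| ≤ α. Then |E[X₁X₂] − E[X₁]E[X₂]| ≤ 4 C₁ C₂ α. -/

import Mathlib

/-!
Conditioning on `σ(X₁)` gives `Cov(X₁, X₂) = E[X₁ h]` with `h = E[X₂ | X₁] - E X₂`, so
`|Cov(X₁, X₂)| ≤ C₁ E|h| = C₁ Cov(η, X₂)`, where `η = 1{h > 0} - 1{h < 0}` is the sign of `h`,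
a `σ(X₁)`-measurable difference of two indicators. Doing the same to `X₂` against `η` replaces
`X₂` by a `σ(X₂)`-measurable difference of two indicators `ξ`, and `Cov(η, ξ)` expands into four
covariances of indicators of events, each at most `α` by the mixing hypothesis.
-/

open MeasureTheory ProbabilityTheory

namespace ProbabilityTheory

variable {Ω : Type*} {m m₀ : MeasurableSpace Ω} {P : Measure Ω}

lemma nonneg_of_ae_abs_le [NeZero P] {f : Ω → ℝ} {C : ℝ} (h : ∀ᵐ ω ∂P, |f ω| ≤ C) : 0 ≤ C :=
  let ⟨_, hω⟩ := h.exists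
  (abs_nonneg _).trans hω

lemma memLp_indicator_one [IsFiniteMeasure P] (p : ENNReal) {s : Set Ω} (hs : MeasurableSet s) :
    MemLp (s.indicator (1 : Ω → ℝ)) p P :=
  memLp_indicator_const p hs 1 (Or.inr (measure_ne_top P s))

lemma covariance_indicator_one [IsProbabilityMeasure P] {s t : Set Ω} (hs : MeasurableSet s)
    (ht : MeasurableSet t) :
    cov[s.indicator 1, t.indicator 1; P] = P.real (s ∩ t) - P.real s * P.real t := by
  rw [covariance_eq_sub (memLp_indicator_one 2 hs) (memLp_indicator_one 2 ht),
    ← Set.inter_indicator_one, integral_indicator_one (hs.inter ht), integral_indicator_one hs,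
    integral_indicator_one ht]

lemma covariance_eq_integral_mul_sub [IsProbabilityMeasure P] {X Y : Ω → ℝ} (hX : MemLp X 2 P)
    (hY : MemLp Y 2 P) : cov[X, Y; P] = ∫ ω, X ω * (Y ω - P[Y]) ∂P := by
  simp_rw [mul_sub]
  rw [integral_sub (f := fun ω ↦ X ω * Y ω) (hX.integrable_mul hY)
      ((hX.integrable one_le_two).mul_const _),
    integral_mul_const, covariance_eq_sub hX hY]
  rfl

lemma integral_mul_condExp [IsFiniteMeasure P] (hm : m ≤ m₀) {f g : Ω → ℝ}
    (hf : StronglyMeasurable[m] f) (hfg : Integrable (f * g) P) (hg : Integrable g P) :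
    ∫ ω, f ω * P[g|m] ω ∂P = ∫ ω, f ω * g ω ∂P :=
  (integral_congr_ae (condExp_mul_of_stronglyMeasurable_left hf hfg hg)).symm.trans
    (integral_condExp hm)

lemma covariance_eq_integral_mul_condExp_sub [IsProbabilityMeasure P] (hm : m ≤ m₀) {f g : Ω → ℝ}
    (hfm : StronglyMeasurable[m] f) (hf : MemLp f 2 P) (hg : MemLp g 2 P) :
    cov[f, g; P] = ∫ ω, f ω * (P[g|m] ω - P[g]) ∂P := by
  have hfc : Integrable (fun ω ↦ f ω * P[g]) P := (hf.integrable one_le_two).mul_const _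
  simp_rw [covariance_eq_integral_mul_sub hf hg, mul_sub]
  rw [integral_sub (f := fun ω ↦ f ω * g ω) (hf.integrable_mul hg) hfc,
    integral_sub (f := fun ω ↦ f ω * P[g|m] ω) (hf.integrable_mul (hg.condExp one_le_two)) hfc,
    integral_mul_condExp hm hfm (hf.integrable_mul hg) (hg.integrable one_le_two)]

lemma indicator_pos_sub_indicator_neg_mul_self (h : Ω → ℝ) (ω : Ω) :
    ({x | 0 < h x}.indicator 1 ω - {x | h x < 0}.indicator (1 : Ω → ℝ) ω) * h ω = |h ω| := by
  rcases lt_trichotomy (h ω) 0 with hneg | hzero | hpos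
  · simp [hneg, hneg.not_gt, abs_of_neg hneg]
  · simp [hzero]
  · simp [hpos, hpos.not_gt, abs_of_pos hpos]

theorem exists_abs_covariance_le_indicator_sub [IsProbabilityMeasure P] (hm : m ≤ m₀)
    {f g : Ω → ℝ} (hf : StronglyMeasurable[m] f) {C : ℝ} (hfC : ∀ᵐ ω ∂P, |f ω| ≤ C)
    (hg : MemLp g 2 P) :
    ∃ s t : Set Ω, MeasurableSet[m] s ∧ MeasurableSet[m] t ∧
      |cov[f, g; P]| ≤ C * |cov[s.indicator 1 - t.indicator 1, g; P]| := by
  set h : Ω → ℝ := fun ω ↦ P[g|m] ω - P[g]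
  have hhm : StronglyMeasurable[m] h := stronglyMeasurable_condExp.sub stronglyMeasurable_const
  have hh : Integrable h P := integrable_condExp.sub (integrable_const _)
  have hs : MeasurableSet[m] {ω | 0 < h ω} := hhm.measurable measurableSet_Ioi
  have ht : MeasurableSet[m] {ω | h ω < 0} := hhm.measurable measurableSet_Iio
  refine ⟨_, _, hs, ht, ?_⟩
  set η : Ω → ℝ := {ω | 0 < h ω}.indicator 1 - {ω | h ω < 0}.indicator 1
  have hηm : StronglyMeasurable[m] η :=
    (stronglyMeasurable_one.indicator hs).sub (stronglyMeasurable_one.indicator ht)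
  have hη : MemLp η 2 P :=
    (memLp_indicator_one 2 (hm _ hs)).sub (memLp_indicator_one 2 (hm _ ht))
  have hfL : MemLp f 2 P := MemLp.of_bound (hf.mono hm).aestronglyMeasurable C hfC
  have hηh : ∫ ω, η ω * h ω ∂P = ∫ ω, |h ω| ∂P :=
    integral_congr_ae (.of_forall (indicator_pos_sub_indicator_neg_mul_self h))
  rw [covariance_eq_integral_mul_condExp_sub hm hf hfL hg,
    covariance_eq_integral_mul_condExp_sub hm hηm hη hg]
  calc |∫ ω, f ω * h ω ∂P| ≤ ∫ ω, |f ω * h ω| ∂P := abs_integral_le_integral_abs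
    _ ≤ ∫ ω, C * |h ω| ∂P := by
      refine integral_mono_ae (hh.bdd_mul hfL.1 hfC).abs (hh.abs.const_mul C) ?_
      filter_upwards [hfC] with ω hω
      rw [abs_mul]
      exact mul_le_mul_of_nonneg_right hω (abs_nonneg _)
    _ = C * |∫ ω, η ω * h ω ∂P| := by
      rw [hηh, abs_of_nonneg (integral_nonneg fun _ ↦ abs_nonneg _), integral_const_mul]

theorem abs_covariance_indicator_sub_le [IsProbabilityMeasure P] {m₁ m₂ : MeasurableSpace Ω}
    (hm₁ : m₁ ≤ m₀) (hm₂ : m₂ ≤ m₀) {α : ℝ}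
    (hmix : ∀ A B : Set Ω, MeasurableSet[m₁] A → MeasurableSet[m₂] B →
      |(P (A ∩ B)).toReal - (P A).toReal * (P B).toReal| ≤ α)
    {A A' B B' : Set Ω} (hA : MeasurableSet[m₁] A) (hA' : MeasurableSet[m₁] A')
    (hB : MeasurableSet[m₂] B) (hB' : MeasurableSet[m₂] B') :
    |cov[A.indicator 1 - A'.indicator 1, B.indicator 1 - B'.indicator 1; P]| ≤ 4 * α := by
  have hcov {s t : Set Ω} (hs : MeasurableSet[m₁] s) (ht : MeasurableSet[m₂] t) :
      |cov[s.indicator 1, t.indicator 1; P]| ≤ α := by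
    rw [covariance_indicator_one (hm₁ _ hs) (hm₂ _ ht)]
    exact hmix s t hs ht
  rw [covariance_sub_sub (memLp_indicator_one 2 (hm₁ _ hA)) (memLp_indicator_one 2 (hm₁ _ hA'))
    (memLp_indicator_one 2 (hm₂ _ hB)) (memLp_indicator_one 2 (hm₂ _ hB'))]
  have h₁ := abs_le.mp (hcov hA hB)
  have h₂ := abs_le.mp (hcov hA hB')
  have h₃ := abs_le.mp (hcov hA' hB)
  have h₄ := abs_le.mp (hcov hA' hB')
  exact abs_le.mpr ⟨by linarith, by linarith⟩

end ProbabilityTheory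

/-- Covariance inequality for α-mixing: real bounded case, constant 4. -/
theorem mixing_covariance_real
    {Ω : Type*} [MeasurableSpace Ω] (P : Measure Ω) [IsProbabilityMeasure P]
    (X₁ X₂ : Ω → ℝ) (hX₁ : Measurable X₁) (hX₂ : Measurable X₂)
    (C₁ C₂ α : ℝ)
    (hb₁ : ∀ᵐ ω ∂P, |X₁ ω| ≤ C₁) (hb₂ : ∀ᵐ ω ∂P, |X₂ ω| ≤ C₂)
    (hmix : ∀ A₁ A₂ : Set Ω,
      MeasurableSet[MeasurableSpace.comap X₁ inferInstance] A₁ →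
      MeasurableSet[MeasurableSpace.comap X₂ inferInstance] A₂ →
      |(P (A₁ ∩ A₂)).toReal - (P A₁).toReal * (P A₂).toReal| ≤ α) :
    |(∫ ω, X₁ ω * X₂ ω ∂P) - (∫ ω, X₁ ω ∂P) * (∫ ω, X₂ ω ∂P)| ≤ 4 * C₁ * C₂ * α := by
  have hL₁ : MemLp X₁ 2 P := .of_bound hX₁.aestronglyMeasurable C₁ hb₁
  have hL₂ : MemLp X₂ 2 P := .of_bound hX₂.aestronglyMeasurable C₂ hb₂
  rw [show ∫ ω, X₁ ω * X₂ ω ∂P = P[X₁ * X₂] from rfl, ← covariance_eq_sub hL₁ hL₂]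
  obtain ⟨A, A', hA, hA', h₁⟩ := exists_abs_covariance_le_indicator_sub hX₁.comap_le
    (comap_measurable X₁).stronglyMeasurable hb₁ hL₂
  have hη : MemLp (A.indicator 1 - A'.indicator 1) 2 P :=
    (memLp_indicator_one 2 (hX₁.comap_le _ hA)).sub (memLp_indicator_one 2 (hX₁.comap_le _ hA'))
  obtain ⟨B, B', hB, hB', h₂⟩ := exists_abs_covariance_le_indicator_sub hX₂.comap_le
    (comap_measurable X₂).stronglyMeasurable hb₂ hη
  have h₃ := abs_covariance_indicator_sub_le hX₁.comap_le hX₂.comap_le hmix hA hA' hB hB'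
  have hC₁ := nonneg_of_ae_abs_le hb₁
  have hC₂ := nonneg_of_ae_abs_le hb₂
  calc |cov[X₁, X₂; P]| ≤ C₁ * |cov[X₂, A.indicator 1 - A'.indicator 1; P]| := by
        rwa [covariance_comm X₂]
    _ ≤ C₁ * (C₂ * |cov[B.indicator 1 - B'.indicator 1, A.indicator 1 - A'.indicator 1; P]|) := by
        gcongr
    _ = C₁ * C₂ * |cov[A.indicator 1 - A'.indicator 1, B.indicator 1 - B'.indicator 1; P]| := by
        rw [covariance_comm]; ring
    _ ≤ C₁ * C₂ * (4 * α) := mul_le_mul_of_nonneg_left h₃ (mul_nonneg hC₁ hC₂)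
    _ = 4 * C₁ * C₂ * α := by ring
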